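/- On the open set Ω = {(t,x) ∈ ℝ² : t ≠ 0 and cos(x) ≠ 0}, the function v(t,x) = 2·arctan(coth(t)·tan(x)) satisfies v_x(t,x) ≠ 0 and solves the potential fast diffusion equation v_t = v_xx / v_x on Ω. -/

import Mathlib

/-- Partial derivative with respect to the first variable (time). -/
noncomputable def pt (u : ℝ × ℝ → ℝ) (p : ℝ × ℝ) : ℝ :=
  deriv (fun s => u (s, p.2)) p.1

/-- Partial derivative with respect to the second variable (space). -/
noncomputable def px (u : ℝ × ℝ → ℝ) (p : ℝ × ℝ) : ℝ :=
  deriv (fun y => u (p.1, y)) p.2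

/-!
Write `c = coth t`. In `x` the potential is `2 arctan (c tan x)`, whose derivative is
`v_x = 2c / D` with `D = cos² x + c² sin² x > 0`, so `v_xx = 4c (1 - c²) sin x cos x / D²`.
In `t` only `c` varies, and `coth' = 1 - coth²` gives `v_t = 2 (1 - c²) sin x cos x / D`,
which is exactly `v_xx / v_x`.
-/

open Real

lemma cos_sq_add_mul_sin_sq_pos {k : ℝ} (hk : 0 < k) (y : ℝ) :
    0 < cos y ^ 2 + k * sin y ^ 2 := by
  rcases eq_or_ne (cos y) 0 with hcos | hcos
  · have hsin : sin y ^ 2 = 1 := by nlinarith [sin_sq_add_cos_sq y]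
    simpa [hcos, hsin] using hk
  · exact add_pos_of_pos_of_nonneg (sq_pos_of_ne_zero hcos) (by positivity)

lemma hasDerivAt_coth {t : ℝ} (ht : t ≠ 0) :
    HasDerivAt (fun s => cosh s / sinh s) (1 - (cosh t / sinh t) ^ 2) t := by
  have hs : sinh t ≠ 0 := sinh_ne_zero.mpr ht
  refine ((hasDerivAt_cosh t).div (hasDerivAt_sinh t) hs).congr_deriv ?_
  field_simp

section ArctanTan

variable (c : ℝ) {y : ℝ}

lemma hasDerivAt_two_mul_arctan_mul_tan (hy : cos y ≠ 0) :
    HasDerivAt (fun y => 2 * arctan (c * tan y))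
      (2 * c / (cos y ^ 2 + c ^ 2 * sin y ^ 2)) y := by
  refine (((hasDerivAt_tan hy).const_mul c).arctan.const_mul 2).congr_deriv ?_
  have hD : 0 < 1 + (c * tan y) ^ 2 := by positivity
  rw [tan_eq_sin_div_cos] at hD ⊢
  field_simp

lemma hasDerivAt_div_cos_sq_add_mul_sin_sq (hc : c ≠ 0) :
    HasDerivAt (fun y => 2 * c / (cos y ^ 2 + c ^ 2 * sin y ^ 2))
      (4 * c * (1 - c ^ 2) * sin y * cos y / (cos y ^ 2 + c ^ 2 * sin y ^ 2) ^ 2) y := by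
  have hD := ((hasDerivAt_cos y).fun_pow 2).fun_add
    (((hasDerivAt_sin y).fun_pow 2).const_mul (c ^ 2))
  refine ((hasDerivAt_const y (2 * c)).fun_div hD
    (cos_sq_add_mul_sin_sq_pos (sq_pos_of_ne_zero hc) y).ne').congr_deriv ?_
  push_cast
  ring

end ArctanTan

lemma HasDerivAt.two_mul_arctan_mul_tan {g : ℝ → ℝ} {g' t y : ℝ} (hg : HasDerivAt g g' t)
    (hy : Real.cos y ≠ 0) :
    HasDerivAt (fun s => 2 * Real.arctan (g s * Real.tan y))
      (2 * g' * Real.sin y * Real.cos y / (Real.cos y ^ 2 + g t ^ 2 * Real.sin y ^ 2)) t := by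
  refine ((hg.mul_const (Real.tan y)).arctan.const_mul 2).congr_deriv ?_
  have hD : 0 < 1 + (g t * Real.tan y) ^ 2 := by positivity
  rw [tan_eq_sin_div_cos] at hD ⊢
  field_simp

theorem potential_fast_diffusion_solution_arctan
    (v : ℝ × ℝ → ℝ)
    (hv : v = fun p =>
      2 * Real.arctan ((Real.cosh p.1 / Real.sinh p.1) * Real.tan p.2))
    (Ω : Set (ℝ × ℝ)) (hΩ : Ω = {p : ℝ × ℝ | p.1 ≠ 0 ∧ Real.cos p.2 ≠ 0}) :
    ∀ p ∈ Ω, px v p ≠ 0 ∧ pt v p = px (px v) p / px v p := by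
  subst hΩ
  rintro ⟨t, x⟩ ⟨ht, hx⟩
  set c := cosh t / sinh t
  have hc : c ≠ 0 := div_ne_zero (cosh_pos t).ne' (sinh_ne_zero.mpr ht)
  have hD := cos_sq_add_mul_sin_sq_pos (sq_pos_of_ne_zero hc) x
  have hpx : ∀ y, cos y ≠ 0 → px v (t, y) = 2 * c / (cos y ^ 2 + c ^ 2 * sin y ^ 2) := by
    intro y hy
    subst hv
    exact (hasDerivAt_two_mul_arctan_mul_tan c hy).deriv
  have hpxx : px (px v) (t, x) =
      4 * c * (1 - c ^ 2) * sin x * cos x / (cos x ^ 2 + c ^ 2 * sin x ^ 2) ^ 2 := by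
    have hnear : (fun y => px v (t, y)) =ᶠ[nhds x]
        fun y => 2 * c / (cos y ^ 2 + c ^ 2 * sin y ^ 2) := by
      filter_upwards [continuous_cos.continuousAt.eventually_ne hx] with y hy
      exact hpx y hy
    exact hnear.deriv_eq.trans (hasDerivAt_div_cos_sq_add_mul_sin_sq c hc).deriv
  have hpt : pt v (t, x) = 2 * (1 - c ^ 2) * sin x * cos x / (cos x ^ 2 + c ^ 2 * sin x ^ 2) := by
    subst hv
    exact ((hasDerivAt_coth ht).two_mul_arctan_mul_tan hx).deriv
  rw [hpx x hx, hpxx, hpt]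
  refine ⟨div_ne_zero (mul_ne_zero two_ne_zero hc) hD.ne', ?_⟩
  field_simp
  ring
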